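/- Markov-type L² inverse inequality in one dimension: there is a constant c > 0 such that for every p ≥ 1 and every polynomial q of degree at most p, ‖q'‖_{L²(-1,1)} ≤ c p² ‖q‖_{L²(-1,1)}. -/

import Mathlib

/-!
Expand `q` in the Legendre basis, normalised by Rodrigues' formula `uₙ = Dⁿ (X² - 1)ⁿ`. The `uₙ`
are orthogonal in `L²(-1, 1)` (integrate by parts `n` times), and since also `uₙ ⟂ uₙ''`,
`‖uₙ'‖² = uₙ(1) uₙ'(1) - uₙ(-1) uₙ'(-1) = n (n + 1) n!² 4ⁿ`, while `‖uₙ‖² = 2 · 4ⁿ n!² / (2n + 1)`;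
hence `‖uₙ'‖² ≤ 3 n³ ‖uₙ‖²`. For `q = ∑ cₙ uₙ`, the triangle inequality, this bound and
Cauchy–Schwarz over the `p + 1` orthogonal terms give `‖q'‖ ≤ √(3p³) √(p + 1) ‖q‖ ≤ 3p² ‖q‖`.
-/

noncomputable section

open MeasureTheory Polynomial Set Finset Nat RealInnerProductSpace

section

variable {ι E : Type*} [NormedAddCommGroup E] [InnerProductSpace ℝ E] {s : Finset ι}

theorem norm_sum_sq_of_pairwise_inner_eq_zero {x : ι → E}
    (hx : ∀ i ∈ s, ∀ j ∈ s, i ≠ j → ⟪x i, x j⟫ = 0) :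
    ‖∑ i ∈ s, x i‖ ^ 2 = ∑ i ∈ s, ‖x i‖ ^ 2 := by
  rw [← real_inner_self_eq_norm_sq, sum_inner]
  refine sum_congr rfl fun i hi => ?_
  rw [inner_sum, sum_eq_single_of_mem i hi fun j hj hji => hx i hi j hj hji.symm,
    real_inner_self_eq_norm_sq]

theorem norm_sum_smul_le_of_pairwise_inner_eq_zero {v w : ι → E} {K : ℝ} (hK : 0 ≤ K)
    (hv : ∀ i ∈ s, ∀ j ∈ s, i ≠ j → ⟪v i, v j⟫ = 0) (hw : ∀ i ∈ s, ‖w i‖ ≤ K * ‖v i‖)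
    (c : ι → ℝ) :
    ‖∑ i ∈ s, c i • w i‖ ≤ K * √(#s) * ‖∑ i ∈ s, c i • v i‖ := by
  have hcv : ∀ i ∈ s, ∀ j ∈ s, i ≠ j → ⟪c i • v i, c j • v j⟫ = 0 := fun i hi j hj hij => by
    rw [real_inner_smul_left, real_inner_smul_right, hv i hi j hj hij, mul_zero, mul_zero]
  have cauchy_schwarz : ∑ i ∈ s, ‖c i • v i‖ ≤ √(#s) * ‖∑ i ∈ s, c i • v i‖ := by
    rw [← Real.sqrt_sq (norm_nonneg (∑ i ∈ s, _)), norm_sum_sq_of_pairwise_inner_eq_zero hcv,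
      ← Real.sqrt_mul (Nat.cast_nonneg _)]
    exact Real.le_sqrt_of_sq_le sq_sum_le_card_mul_sum_sq
  calc ‖∑ i ∈ s, c i • w i‖ ≤ ∑ i ∈ s, |c i| * ‖w i‖ := by
        simpa only [norm_smul, Real.norm_eq_abs] using norm_sum_le s fun i => c i • w i
    _ ≤ ∑ i ∈ s, |c i| * (K * ‖v i‖) := by gcongr with i hi; exact hw i hi
    _ = K * ∑ i ∈ s, ‖c i • v i‖ := by
        rw [mul_sum]; congr! 1 with i; rw [norm_smul, Real.norm_eq_abs]; ring
    _ ≤ K * √(#s) * ‖∑ i ∈ s, c i • v i‖ := by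
        rw [mul_assoc]; exact mul_le_mul_of_nonneg_left cauchy_schwarz hK

end

namespace Polynomial

theorem memLp_eval_restrict_Ioc (a b : ℝ) (q : ℝ[X]) :
    MemLp (fun x => q.eval x) 2 (volume.restrict (Ioc a b)) := by
  obtain ⟨C, hC⟩ := isCompact_Icc.exists_bound_of_continuousOn q.continuous.continuousOn
  exact MemLp.of_bound q.continuous.aestronglyMeasurable C
    (ae_restrict_of_forall_mem measurableSet_Ioc fun x hx => hC x (Ioc_subset_Icc_self hx))

def toL2 (a b : ℝ) : ℝ[X] →ₗ[ℝ] Lp ℝ 2 (volume.restrict (Ioc a b)) where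
  toFun q := (memLp_eval_restrict_Ioc a b q).toLp _
  map_add' f g := by
    simp_rw [eval_add]
    exact MemLp.toLp_add _ _
  map_smul' c f := by
    simp_rw [eval_smul, smul_eq_mul]
    exact MemLp.toLp_const_smul c _

theorem inner_toL2 {a b : ℝ} (hab : a ≤ b) (f g : ℝ[X]) :
    ⟪toL2 a b f, toL2 a b g⟫ = ∫ x in a..b, f.eval x * g.eval x := by
  rw [MeasureTheory.L2.inner_def, intervalIntegral.integral_of_le hab]
  refine integral_congr_ae ?_
  filter_upwards [MemLp.coeFn_toLp (memLp_eval_restrict_Ioc a b f),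
    MemLp.coeFn_toLp (memLp_eval_restrict_Ioc a b g)] with x hf hg
  simp only [toL2, LinearMap.coe_mk, AddHom.coe_mk, hf, hg, RCLike.inner_apply, conj_trivial]
  ring

theorem norm_toL2 {a b : ℝ} (hab : a ≤ b) (f : ℝ[X]) :
    ‖toL2 a b f‖ = √(∫ x in a..b, f.eval x ^ 2) := by
  simp_rw [norm_eq_sqrt_real_inner, inner_toL2 hab, sq]

theorem integral_eval_mul_eval_derivative (a b : ℝ) (f g : ℝ[X]) :
    ∫ x in a..b, f.eval x * g.derivative.eval x =
      f.eval b * g.eval b - f.eval a * g.eval a - ∫ x in a..b, f.derivative.eval x * g.eval x :=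
  intervalIntegral.integral_mul_deriv_eq_deriv_mul (fun x _ => f.hasDerivAt x)
    (fun x _ => g.hasDerivAt x) (f.derivative.continuous.intervalIntegrable a b)
    (g.derivative.continuous.intervalIntegrable a b)

theorem integral_eval_iterate_derivative_mul {a b : ℝ} {f : ℝ[X]} {k : ℕ}
    (hf : ∀ i < k, (derivative^[i] f).IsRoot a ∧ (derivative^[i] f).IsRoot b) (g : ℝ[X]) :
    ∫ x in a..b, (derivative^[k] f).eval x * g.eval x =
      (-1) ^ k * ∫ x in a..b, f.eval x * (derivative^[k] g).eval x := by
  induction k generalizing g with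
  | zero => simp
  | succ k ih =>
    obtain ⟨ha, hb⟩ := hf k k.lt_succ_self
    have parts := integral_eval_mul_eval_derivative a b (derivative^[k] f) g
    rw [ha.eq_zero, hb.eq_zero, ih (fun i hi => hf i (by omega))] at parts
    rw [Function.iterate_succ_apply', Function.iterate_succ_apply, pow_succ]
    linarith

theorem exists_eq_sum_smul_of_degree_lt {K : Type*} [Field K] {P : ℕ → K[X]}
    (hdeg : ∀ n, (P n).natDegree ≤ n) (hcoeff : ∀ n, (P n).coeff n ≠ 0) {p : ℕ} {q : K[X]}
    (hq : q.degree < p) : ∃ c : ℕ → K, q = ∑ n ∈ range p, c n • P n := by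
  induction p generalizing q with
  | zero => exact ⟨0, by simpa using hq⟩
  | succ p ih =>
    set d := q.coeff p / (P p).coeff p
    have hlower : (q - d • P p).degree < p := by
      rw [degree_lt_iff_coeff_zero] at hq ⊢
      intro N hN
      rcases hN.eq_or_lt with rfl | hN'
      · rw [coeff_sub, coeff_smul, smul_eq_mul, div_mul_cancel₀ _ (hcoeff _), sub_self]
      · rw [coeff_sub, coeff_smul, hq N (by exact_mod_cast hN'),
          coeff_eq_zero_of_natDegree_lt ((hdeg _).trans_lt hN'), smul_zero, sub_zero]
    obtain ⟨c, hc⟩ := ih hlower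
    refine ⟨Function.update c p d, ?_⟩
    rw [sum_range_succ, Function.update_self,
      sum_congr rfl fun n hn => by rw [Function.update_of_ne (mem_range.1 hn).ne], ← hc,
      sub_add_cancel]

theorem eval_iterate_derivative_X_sub_C_pow_mul {R : Type*} [CommRing R] (a : R) (n k : ℕ)
    (g : R[X]) :
    (derivative^[n + k] ((X - C a) ^ n * g)).eval a =
      (n + k).choose k * n ! * (derivative^[k] g).eval a := by
  rw [iterate_derivative_mul, eval_finsetSum, sum_eq_single_of_mem k (mem_range.2 (by omega))]
  · rw [Nat.add_sub_cancel, iterate_derivative_X_sub_pow_self, nsmul_eq_mul, eval_mul, eval_mul,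
      eval_natCast, eval_natCast, mul_assoc]
  · intro j hj hjk
    rw [iterate_derivative_X_sub_pow, smul_mul_assoc, eval_smul, eval_smul, eval_mul, eval_pow,
      eval_sub, eval_X, eval_C, sub_self]
    rcases Nat.lt_or_ge n (n + k - j) with hlt | hle
    · rw [Nat.descFactorial_eq_zero_iff_lt.2 hlt, zero_smul, smul_zero]
    · have : n - (n + k - j) ≠ 0 := by have := mem_range.1 hj; omega
      rw [zero_pow this, zero_mul, smul_zero, smul_zero]

/-- Rodrigues' formula: `rodrigues n = 2ⁿ n! Pₙ` for the Legendre polynomial `Pₙ`. -/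
def rodrigues (n : ℕ) : ℝ[X] := derivative^[n] ((X ^ 2 - 1) ^ n)

theorem X_sq_sub_one_pow_eq {a : ℝ} (ha : a ^ 2 = 1) (n : ℕ) :
    ((X : ℝ[X]) ^ 2 - 1) ^ n = (X - C a) ^ n * (X + C a) ^ n := by
  have hCa : C a ^ 2 = 1 := by rw [← C_pow, ha, C_1]
  rw [← mul_pow]
  congr 1
  linear_combination hCa

theorem isRoot_iterate_derivative_X_sq_sub_one_pow {a : ℝ} (ha : a ^ 2 = 1) {n i : ℕ}
    (hi : i < n) : (derivative^[i] (((X : ℝ[X]) ^ 2 - 1) ^ n)).IsRoot a := by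
  refine dvd_iff_isRoot.1 ((dvd_pow_self _ (Nat.sub_ne_zero_of_lt hi)).trans
    (pow_sub_dvd_iterate_derivative_of_pow_dvd i ?_))
  rw [X_sq_sub_one_pow_eq ha]
  exact dvd_mul_right _ _

theorem integral_rodrigues_mul (n : ℕ) (g : ℝ[X]) :
    ∫ x in (-1)..1, (rodrigues n).eval x * g.eval x =
      (-1) ^ n * ∫ x in (-1)..1, (((X : ℝ[X]) ^ 2 - 1) ^ n).eval x * (derivative^[n] g).eval x :=
  integral_eval_iterate_derivative_mul (fun _ hi =>
    ⟨isRoot_iterate_derivative_X_sq_sub_one_pow (by norm_num) hi,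
      isRoot_iterate_derivative_X_sq_sub_one_pow (by norm_num) hi⟩) g

theorem integral_rodrigues_mul_eq_zero {n : ℕ} {g : ℝ[X]} (hg : derivative^[n] g = 0) :
    ∫ x in (-1)..1, (rodrigues n).eval x * g.eval x = 0 := by
  simp [integral_rodrigues_mul, hg]

theorem natDegree_X_sq_sub_one_pow (n : ℕ) : (((X : ℝ[X]) ^ 2 - 1) ^ n).natDegree = 2 * n := by
  rw [natDegree_pow, ← C_1, natDegree_X_pow_sub_C, mul_comm]

theorem monic_X_sq_sub_one_pow (n : ℕ) : (((X : ℝ[X]) ^ 2 - 1) ^ n).Monic := by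
  simpa using (monic_X_pow_sub_C (1 : ℝ) two_ne_zero).pow n

theorem natDegree_rodrigues_le (n : ℕ) : (rodrigues n).natDegree ≤ n := by
  have h := natDegree_iterate_derivative (((X : ℝ[X]) ^ 2 - 1) ^ n) n
  rw [natDegree_X_sq_sub_one_pow] at h
  unfold rodrigues
  omega

theorem coeff_rodrigues_self_ne_zero (n : ℕ) : (rodrigues n).coeff n ≠ 0 := by
  rw [rodrigues, coeff_iterate_derivative, ← two_mul, ← natDegree_X_sq_sub_one_pow,
    (monic_X_sq_sub_one_pow n).coeff_natDegree, nsmul_one, Nat.cast_ne_zero,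
    natDegree_X_sq_sub_one_pow, Ne, Nat.descFactorial_eq_zero_iff_lt]
  omega

theorem iterate_derivative_rodrigues (n : ℕ) :
    derivative^[n] (rodrigues n) = ((2 * n)! : ℝ[X]) := by
  rw [rodrigues, ← Function.iterate_add_apply, ← two_mul]
  have h := natDegree_iterate_derivative (((X : ℝ[X]) ^ 2 - 1) ^ n) (2 * n)
  rw [natDegree_X_sq_sub_one_pow, Nat.sub_self, Nat.le_zero] at h
  rw [eq_C_of_natDegree_eq_zero h, coeff_iterate_derivative, zero_add,
    ← natDegree_X_sq_sub_one_pow, (monic_X_sq_sub_one_pow n).coeff_natDegree,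
    natDegree_X_sq_sub_one_pow, Nat.descFactorial_self, nsmul_one, C_eq_natCast]

theorem integral_one_sub_sq_pow (n : ℕ) :
    (2 * n + 1)! * ∫ x in (-1 : ℝ)..1, (1 - x ^ 2) ^ n = 2 * 4 ^ n * (n ! : ℝ) ^ 2 := by
  induction n with
  | zero => norm_num
  | succ n ih =>
    have hderiv (x : ℝ) : HasDerivAt (fun x : ℝ => x * (1 - x ^ 2) ^ (n + 1))
        ((2 * n + 3) * (1 - x ^ 2) ^ (n + 1) - (2 * n + 2) * (1 - x ^ 2) ^ n) x := by
      refine ((hasDerivAt_id' x).mul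
        (((hasDerivAt_pow 2 x).const_sub 1).pow (n + 1))).congr_deriv ?_
      simp only [Pi.pow_apply]
      push_cast
      ring
    have hint (k : ℕ) (c : ℝ) :
        IntervalIntegrable (fun x : ℝ => c * (1 - x ^ 2) ^ k) volume (-1) 1 :=
      (by fun_prop : Continuous fun x : ℝ => c * (1 - x ^ 2) ^ k).intervalIntegrable _ _
    have hrec := intervalIntegral.integral_eq_sub_of_hasDerivAt (fun x _ => hderiv x)
      ((hint _ _).sub (hint _ _))
    rw [intervalIntegral.integral_sub (hint _ _) (hint _ _), intervalIntegral.integral_const_mul,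
      intervalIntegral.integral_const_mul] at hrec
    have hfac : ((2 * (n + 1) + 1)! : ℝ) = (2 * n + 3) * (2 * n + 2) * (2 * n + 1)! := by
      rw [show 2 * (n + 1) + 1 = (2 * n + 1 + 1) + 1 by ring, Nat.factorial_succ,
        Nat.factorial_succ]
      push_cast
      ring
    rw [hfac, Nat.factorial_succ n, Nat.cast_mul, Nat.cast_succ]
    norm_num at hrec
    linear_combination (2 * (n : ℝ) + 2) * (2 * n + 1)! * hrec + (2 * (n : ℝ) + 2) ^ 2 * ih

theorem integral_rodrigues_sq (n : ℕ) :
    (2 * n + 1) * ∫ x in (-1)..1, (rodrigues n).eval x ^ 2 = 2 * 4 ^ n * (n ! : ℝ) ^ 2 := by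
  have h : ∫ x in (-1)..1, (rodrigues n).eval x ^ 2 =
      (2 * n)! * ∫ x in (-1 : ℝ)..1, (1 - x ^ 2) ^ n := by
    simp_rw [sq]
    rw [integral_rodrigues_mul, iterate_derivative_rodrigues,
      ← intervalIntegral.integral_const_mul, ← intervalIntegral.integral_const_mul]
    congr 1 with x
    simp only [eval_pow, eval_sub, eval_X, eval_one, eval_natCast]
    rw [← mul_assoc, ← mul_pow, neg_one_mul, neg_sub]
    ring
  rw [h, ← integral_one_sub_sq_pow, Nat.factorial_succ, Nat.cast_mul]
  push_cast
  ring

theorem rodrigues_eval {a : ℝ} (ha : a ^ 2 = 1) (n : ℕ) :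
    (rodrigues n).eval a = n ! * (2 * a) ^ n := by
  have h := eval_iterate_derivative_X_sub_C_pow_mul a n 0 ((X + C a) ^ n)
  rw [add_zero, Nat.choose_zero_right, Function.iterate_zero_apply] at h
  rw [rodrigues, X_sq_sub_one_pow_eq ha, h]
  simp only [eval_pow, eval_add, eval_X, eval_C]
  ring

theorem derivative_rodrigues_eval {a : ℝ} (ha : a ^ 2 = 1) (n : ℕ) :
    (derivative (rodrigues n)).eval a = (n + 1)! * n * (2 * a) ^ (n - 1) := by
  have h := eval_iterate_derivative_X_sub_C_pow_mul a n 1 ((X + C a) ^ n)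
  rw [Nat.choose_one_right, Function.iterate_one, derivative_X_add_C_pow] at h
  rw [rodrigues, ← Function.iterate_succ_apply' derivative, X_sq_sub_one_pow_eq ha, h,
    Nat.factorial_succ]
  simp only [eval_mul, eval_pow, eval_add, eval_X, eval_C]
  push_cast
  ring

theorem two_mul_rodrigues_eval_mul_derivative_rodrigues_eval {a : ℝ} (ha : a ^ 2 = 1) (n : ℕ) :
    2 * ((rodrigues n).eval a * (derivative (rodrigues n)).eval a) =
      a * n * n ! * (n + 1)! * 4 ^ n := by
  rw [rodrigues_eval ha, derivative_rodrigues_eval ha]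
  rcases n with _ | m
  · simp
  · have hpow : (2 * a) ^ (m + 1) * (2 * a) ^ m = 2 * a * 4 ^ m := by
      calc (2 * a) ^ (m + 1) * (2 * a) ^ m = 2 * a * ((2 * a) ^ 2) ^ m := by
            rw [← pow_mul]; ring
        _ = 2 * a * 4 ^ m := by rw [mul_pow, ha, mul_one]; norm_num
    rw [Nat.add_sub_cancel]
    push_cast
    linear_combination (2 * (m + 1)! * (m + 1 + 1)! * (m + 1 : ℝ)) * hpow

theorem integral_derivative_rodrigues_sq (n : ℕ) :
    ∫ x in (-1)..1, (derivative (rodrigues n)).eval x ^ 2 = n * n ! * (n + 1)! * 4 ^ n := by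
  simp_rw [sq]
  have hortho : ∫ x in (-1)..1,
      (rodrigues n).eval x * (derivative (derivative (rodrigues n))).eval x = 0 := by
    refine integral_rodrigues_mul_eq_zero ?_
    rw [rodrigues, ← Function.iterate_succ_apply' derivative,
      ← Function.iterate_succ_apply' derivative, ← Function.iterate_add_apply]
    exact iterate_derivative_eq_zero (by rw [natDegree_X_sq_sub_one_pow]; omega)
  have hparts :=
    integral_eval_mul_eval_derivative (-1) 1 (rodrigues n) (derivative (rodrigues n))
  have h1 := two_mul_rodrigues_eval_mul_derivative_rodrigues_eval (a := 1) (by norm_num) n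
  have h2 := two_mul_rodrigues_eval_mul_derivative_rodrigues_eval (a := -1) (by norm_num) n
  linear_combination hparts - hortho + h1 / 2 - h2 / 2

theorem integral_derivative_rodrigues_sq_le (n : ℕ) :
    ∫ x in (-1)..1, (derivative (rodrigues n)).eval x ^ 2 ≤
      3 * n ^ 3 * ∫ x in (-1)..1, (rodrigues n).eval x ^ 2 := by
  have hnorm := integral_rodrigues_sq n
  have hcubic : (n : ℝ) * (n + 1) * (2 * n + 1) ≤ 6 * n ^ 3 := by
    rcases n with _ | m
    · simp
    · push_cast
      nlinarith [sq_nonneg (m : ℝ), (m.cast_nonneg : (0 : ℝ) ≤ m)]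
  rw [integral_derivative_rodrigues_sq,
    ← mul_le_mul_iff_of_pos_left (by positivity : (0 : ℝ) < 2 * n + 1)]
  calc (2 * n + 1) * (n * n ! * (n + 1)! * 4 ^ n : ℝ)
      = n * (n + 1) * (2 * n + 1) * ((n ! : ℝ) ^ 2 * 4 ^ n) := by
        rw [Nat.factorial_succ]; push_cast; ring
    _ ≤ 6 * n ^ 3 * ((n ! : ℝ) ^ 2 * 4 ^ n) := by gcongr
    _ = (2 * n + 1) * (3 * n ^ 3 * ∫ x in (-1)..1, (rodrigues n).eval x ^ 2) := by
        linear_combination (-3 * (n : ℝ) ^ 3) * hnorm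

theorem inner_toL2_rodrigues_eq_zero {i j : ℕ} (hij : i ≠ j) :
    ⟪toL2 (-1) 1 (rodrigues i), toL2 (-1) 1 (rodrigues j)⟫ = 0 := by
  wlog hji : j < i generalizing i j
  · rw [real_inner_comm]
    exact this hij.symm (by omega)
  rw [inner_toL2 (by norm_num)]
  exact integral_rodrigues_mul_eq_zero
    (iterate_derivative_eq_zero ((natDegree_rodrigues_le j).trans_lt hji))

theorem norm_toL2_derivative_rodrigues_le (n : ℕ) :
    ‖toL2 (-1) 1 (derivative (rodrigues n))‖ ≤ √(3 * n ^ 3) * ‖toL2 (-1) 1 (rodrigues n)‖ := by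
  rw [norm_toL2 (by norm_num), norm_toL2 (by norm_num), ← Real.sqrt_mul (by positivity)]
  exact Real.sqrt_le_sqrt (integral_derivative_rodrigues_sq_le n)

end Polynomial

theorem stmt_19 :
    ∃ c > 0, ∀ (p : ℕ), 1 ≤ p → ∀ q : Polynomial ℝ, q.natDegree ≤ p →
      Real.sqrt (∫ x in (-1:ℝ)..1, (q.derivative.eval x)^2)
        ≤ c * (p : ℝ)^2 * Real.sqrt (∫ x in (-1:ℝ)..1, (q.eval x)^2) := by
  refine ⟨3, by norm_num, fun p hp q hq => ?_⟩
  obtain ⟨c, rfl⟩ := exists_eq_sum_smul_of_degree_lt natDegree_rodrigues_le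
    coeff_rodrigues_self_ne_zero ((degree_le_of_natDegree_le hq).trans_lt
      (by exact_mod_cast p.lt_succ_self))
  rw [← norm_toL2 (by norm_num), ← norm_toL2 (by norm_num)]
  simp only [map_sum, map_smul]
  have hconst : √(3 * (p : ℝ) ^ 3) * √(#(range (p + 1)) : ℝ) ≤ 3 * p ^ 2 := by
    have hp' : (1 : ℝ) ≤ p := by exact_mod_cast hp
    rw [card_range, ← Real.sqrt_mul (by positivity), Real.sqrt_le_left (by positivity)]
    push_cast
    nlinarith
  calc ‖∑ n ∈ range (p + 1), c n • toL2 (-1) 1 (derivative (rodrigues n))‖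
      ≤ √(3 * (p : ℝ) ^ 3) * √(#(range (p + 1)) : ℝ) *
          ‖∑ n ∈ range (p + 1), c n • toL2 (-1) 1 (rodrigues n)‖ :=
        norm_sum_smul_le_of_pairwise_inner_eq_zero (Real.sqrt_nonneg _)
          (fun i _ j _ hij => inner_toL2_rodrigues_eq_zero hij)
          (fun n hn => (norm_toL2_derivative_rodrigues_le n).trans (by
            gcongr
            exact_mod_cast Nat.lt_succ_iff.1 (mem_range.1 hn))) c
    _ ≤ 3 * p ^ 2 * ‖∑ n ∈ range (p + 1), c n • toL2 (-1) 1 (rodrigues n)‖ := by gcongr
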